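/- Let A ∈ ℂ^{n×n}, B ∈ ℂ^{n×1}, C ∈ ℂ^{1×n}, r ∈ ℕ, and suppose CA^{k}B = 0 for all k ∈ {0,…,r−2} (relative degree structure with b = CA^{r−1}B ≠ 0). If rank [[A − λI, B],[CA^r, b]] = n+1 for some λ ∈ ℂ, then rank [[A − λI, B],[C, 0]] = n+1. -/
import Mathlib


open Matrix

lemma isUnit_of_rank_eq_card {m : Type*} [Fintype m] [DecidableEq m]
    (M : Matrix m m ℂ) (h : M.rank = Fintype.card m) : IsUnit M := by
  rw [← Matrix.mulVec_injective_iff_isUnit]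
  have hsurj : Function.Surjective M.mulVecLin := by
    rw [← LinearMap.range_eq_top]
    apply Submodule.eq_top_of_finrank_eq
    rw [← Matrix.rank, h, Module.finrank_pi]
  exact (LinearMap.injective_iff_surjective).2 hsurj

theorem stmt_3 (n r : ℕ) (hr : 1 ≤ r)
    (A : Matrix (Fin n) (Fin n) ℂ) (B : Matrix (Fin n) (Fin 1) ℂ)
    (C : Matrix (Fin 1) (Fin n) ℂ)
    (hrel : ∀ k : ℕ, k < r - 1 → C * A ^ k * B = 0)
    (hb : C * A ^ (r - 1) * B ≠ 0) (lam : ℂ)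
    (h : (Matrix.fromBlocks (A - lam • 1) B (C * A ^ r) (C * A ^ (r - 1) * B)).rank = n + 1) :
    (Matrix.fromBlocks (A - lam • 1) B C (0 : Matrix (Fin 1) (Fin 1) ℂ)).rank = n + 1 := by
  have hcard : Fintype.card (Fin n ⊕ Fin 1) = n + 1 := by simp
  set M1 := Matrix.fromBlocks (A - lam • 1) B (C * A ^ r) (C * A ^ (r - 1) * B) with hM1def
  have hM1 : IsUnit M1 := isUnit_of_rank_eq_card _ (by rw [h, hcard])
  have hM1inj := Matrix.mulVec_injective_iff_isUnit.2 hM1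
  have hM2 : IsUnit (Matrix.fromBlocks (A - lam • 1) B C (0 : Matrix (Fin 1) (Fin 1) ℂ)) := by
    rw [← Matrix.mulVec_injective_iff_isUnit]
    have key : ∀ v : Fin n ⊕ Fin 1 → ℂ,
        (Matrix.fromBlocks (A - lam • 1) B C (0 : Matrix (Fin 1) (Fin 1) ℂ)) *ᵥ v = 0 →
        v = 0 := by
      intro v hv
      set x := v ∘ Sum.inl with hx
      set u := v ∘ Sum.inr with hu
      rw [Matrix.fromBlocks_mulVec] at hv
      have htop : (A - lam • 1) *ᵥ x + B *ᵥ u = 0 := by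
        funext i; exact congrFun hv (Sum.inl i)
      have hbot : C *ᵥ x = 0 := by
        funext i
        have := congrFun hv (Sum.inr i)
        simpa using this
      have hAx : A *ᵥ x = lam • x - B *ᵥ u := by
        have : A *ᵥ x - lam • x + B *ᵥ u = 0 := by
          rw [← htop, Matrix.sub_mulVec, Matrix.smul_mulVec, Matrix.one_mulVec]
        linear_combination (norm := module) this
      have key2 : ∀ k : ℕ, k ≤ r - 1 → (C * A ^ k) *ᵥ x = 0 := by
        intro k
        induction k with
        | zero => intro _; simpa using hbot
        | succ k ih =>
          intro hk
          have hk' : k < r - 1 := hk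
          have ih' := ih hk'.le
          rw [pow_succ, ← Matrix.mul_assoc, ← Matrix.mulVec_mulVec, hAx,
            Matrix.mulVec_sub, Matrix.mulVec_smul, ih', smul_zero,
            Matrix.mulVec_mulVec, hrel k hk', Matrix.zero_mulVec, zero_sub, neg_zero]
      have hbot1 : (C * A ^ r) *ᵥ x + (C * A ^ (r - 1) * B) *ᵥ u = 0 := by
        have hrw : r = (r - 1) + 1 := (Nat.succ_pred_eq_of_pos hr).symm
        have hpow : C * A ^ r = C * A ^ (r - 1) * A := by
          rw [Matrix.mul_assoc, ← pow_succ, ← hrw]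
        rw [hpow, ← Matrix.mulVec_mulVec, hAx,
          Matrix.mulVec_sub, Matrix.mulVec_smul, key2 (r - 1) le_rfl, smul_zero,
          Matrix.mulVec_mulVec, zero_sub, neg_add_cancel]
      have hM1v : M1 *ᵥ v = 0 := by
        rw [hM1def, Matrix.fromBlocks_mulVec]
        funext i
        cases i with
        | inl i => simpa using congrFun htop i
        | inr i => simpa using congrFun hbot1 i
      have : M1 *ᵥ v = M1 *ᵥ 0 := by rw [hM1v, Matrix.mulVec_zero]
      exact hM1inj this
    intro v w hvw
    have : v - w = 0 := key _ (by rw [Matrix.mulVec_sub, hvw, sub_self])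
    exact sub_eq_zero.mp this
  rw [Matrix.rank_of_isUnit _ hM2, hcard]
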